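/- Let D = (d₁, …, d_k) with d₁ ≥ … ≥ d_k ≥ 2 be a degree sequence realizable by a tree. Then there exists a tree T with degree sequence D such that SO(T) ≤ SO(T′) for every tree T′ with degree sequence D, and moreover T satisfies the path condition. -/

import Mathlib

open SimpleGraph

/-- Degree of a vertex. -/
noncomputable def deg {V : Type*} (G : SimpleGraph V) (v : V) : ℕ :=
  Nat.card (G.neighborSet v)

/-- Sombor index. -/
noncomputable def somborIndex {V : Type*} (G : SimpleGraph V) : ℝ :=
  ∑ᶠ e ∈ G.edgeSet,
    Sym2.lift ⟨fun u v => Real.sqrt ((deg G u : ℝ) ^ 2 + (deg G v : ℝ) ^ 2),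
      fun u v => by simp [add_comm]⟩ e

/-- Multiset of degrees of non-pendant vertices. -/
noncomputable def degSeq {V : Type*} [Fintype V] (G : SimpleGraph V) : Multiset ℕ :=
  ((Finset.univ : Finset V).filter (fun v => deg G v ≠ 1)).val.map (deg G)

def pathCondition {V : Type*} (G : SimpleGraph V) : Prop :=
  ∀ ⦃u v : V⦄ (p : G.Walk u v), p.IsPath → 3 ≤ p.length →
    deg G u < deg G v → deg G (p.getVert 1) ≤ deg G (p.getVert (p.length - 1))

def attachPendants {V : Type*} (G : SimpleGraph V) (v : V) (k : ℕ) :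
    SimpleGraph (V ⊕ Fin k) where
  Adj x y :=
    match x, y with
    | Sum.inl a, Sum.inl b => G.Adj a b
    | Sum.inl a, Sum.inr _ => a = v
    | Sum.inr _, Sum.inl b => b = v
    | Sum.inr _, Sum.inr _ => False
  symm := ⟨by
    rintro (a | i) (b | j) h
    · exact h.symm
    · exact h
    · exact h
    · exact h.elim⟩
  loopless := ⟨by
    rintro (a | i) h
    · exact G.loopless.irrefl a h
    · exact h⟩

/-!
A minimizer exists because every tree with degree sequence `D = (d₁, …, d_k)` has exactly
`d₁ + ⋯ + d_k - k + 2` vertices (handshake lemma), so there are only finitely many candidates.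
Suppose a minimizer `T` violates the path condition along a path `u b … c v`, i.e.
`deg u < deg v` and `deg c < deg b`. The 2-switch replacing the edges `ub`, `cv` by `uc`, `bv`
keeps all degrees, and it keeps `T` a tree because the middle segment `b … c` survives. Only the
weights of these four edges change, and `√(a² + c²) + √(b² + d²) < √(a² + b²) + √(c² + d²)`
for `a < d`, `c < b` makes the Sombor index strictly smaller, a contradiction.
-/

/-- `x ↦ √(x² + b²) - √(x² + c²) = (b² - c²) / (√(x² + b²) + √(x² + c²))` is decreasing on
`x ≥ 0` when `c < b`. -/
lemma sqrt_add_sqrt_lt_sqrt_add_sqrt {a b c d : ℝ} (ha : 0 ≤ a) (hc : 0 ≤ c) (had : a < d)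
    (hcb : c < b) :
    √(a ^ 2 + c ^ 2) + √(b ^ 2 + d ^ 2) < √(a ^ 2 + b ^ 2) + √(c ^ 2 + d ^ 2) := by
  have hsq (x y : ℝ) : √(x ^ 2 + y ^ 2) ^ 2 = x ^ 2 + y ^ 2 := Real.sq_sqrt (by positivity)
  have hAB : √(a ^ 2 + c ^ 2) < √(a ^ 2 + b ^ 2) :=
    Real.sqrt_lt_sqrt (by positivity) (by nlinarith)
  have hCE : √(c ^ 2 + d ^ 2) < √(b ^ 2 + d ^ 2) :=
    Real.sqrt_lt_sqrt (by positivity) (by nlinarith)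
  have hAC : √(a ^ 2 + b ^ 2) < √(b ^ 2 + d ^ 2) :=
    Real.sqrt_lt_sqrt (by positivity) (by nlinarith)
  have hBE : √(a ^ 2 + c ^ 2) ≤ √(c ^ 2 + d ^ 2) := Real.sqrt_le_sqrt (by nlinarith)
  have := Real.sqrt_nonneg (a ^ 2 + c ^ 2)
  nlinarith [hsq a b, hsq a c, hsq b d, hsq c d]

namespace SimpleGraph

variable {V : Type*} {G : SimpleGraph V} {u b c v : V}

lemma Connected.of_adj_reachable {H : SimpleGraph V} (hG : G.Connected)
    (h : ∀ ⦃x y⦄, G.Adj x y → H.Reachable x y) : H.Connected :=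
  have := hG.nonempty
  ⟨fun x y => (reachable_iff_reflTransGen x y).2 <|
    ((reachable_iff_reflTransGen x y).1 (hG x y)).lift' id
      fun a b hab => (reachable_iff_reflTransGen a b).1 (h hab)⟩

lemma Walk.exists_eq_cons_concat {u v : V} (p : G.Walk u v) (hp : 2 ≤ p.length) :
    ∃ (b c : V) (hub : G.Adj u b) (q : G.Walk b c) (hcv : G.Adj c v),
      p = cons hub (q.concat hcv) := by
  match p, hp with
  | cons hub (cons h p), _ =>
    obtain ⟨c, q, hcv, hq⟩ := p.exists_cons_eq_concat h
    exact ⟨_, c, hub, q, hcv, by rw [hq]⟩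

def twoSwitch (G : SimpleGraph V) (u b c v : V) : SimpleGraph V :=
  fromEdgeSet (insert s(u, c) (insert s(b, v) (G.edgeSet \ {s(u, b), s(c, v)})))

lemma edgeSet_twoSwitch (huc : u ≠ c) (hbv : b ≠ v) :
    (G.twoSwitch u b c v).edgeSet =
      insert s(u, c) (insert s(b, v) (G.edgeSet \ {s(u, b), s(c, v)})) := by
  rw [twoSwitch, edgeSet_fromEdgeSet, sdiff_eq_left, Set.disjoint_left]
  rintro e (rfl | rfl | ⟨he, -⟩)
  · simpa using huc
  · simpa using hbv
  · exact G.not_isDiag_of_mem_edgeSet he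

lemma finsum_edgeSet_twoSwitch_add [Finite V] {M : Type*} [AddCommMonoid M] (f : Sym2 V → M)
    (hub : G.Adj u b) (hcv : G.Adj c v) (huc : ¬G.Adj u c) (hbv : ¬G.Adj b v)
    (huc' : u ≠ c) (hbv' : b ≠ v) (huv : u ≠ v) :
    ∑ᶠ e ∈ (G.twoSwitch u b c v).edgeSet, f e + (f s(u, b) + f s(c, v)) =
      ∑ᶠ e ∈ G.edgeSet, f e + (f s(u, c) + f s(b, v)) := by
  set S := G.edgeSet \ {s(u, b), s(c, v)}
  have hS : S.Finite := Set.toFinite S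
  have hnot {e : Sym2 V} (he : e ∉ G.edgeSet) : e ∉ S := fun h => he h.1
  have hG : ∑ᶠ e ∈ G.edgeSet, f e = f s(u, b) + (f s(c, v) + ∑ᶠ e ∈ S, f e) := by
    have hub_cv : s(u, b) ≠ s(c, v) := by simp [huc', huv]
    have hE : G.edgeSet = insert s(u, b) (insert s(c, v) S) := by
      ext e
      by_cases e = s(u, b) <;> by_cases e = s(c, v) <;> simp_all [S]
    rw [hE, finsum_mem_insert _ (by simp [S, hub_cv]) (hS.insert _),
      finsum_mem_insert _ (by simp [S]) hS]
  have hH : ∑ᶠ e ∈ (G.twoSwitch u b c v).edgeSet, f e =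
      f s(u, c) + (f s(b, v) + ∑ᶠ e ∈ S, f e) := by
    have huc_bv : s(u, c) ≠ s(b, v) := by simp [hub.ne, huv]
    rw [edgeSet_twoSwitch huc' hbv', finsum_mem_insert _ ?_ (hS.insert _),
      finsum_mem_insert _ (hnot hbv) hS]
    simp only [Set.mem_insert_iff, not_or]
    exact ⟨huc_bv, hnot huc⟩
  rw [hG, hH]
  abel

lemma Connected.twoSwitch (hG : G.Connected) (q : G.Walk b c) (hqu : u ∉ q.support)
    (hqv : v ∉ q.support) : (G.twoSwitch u b c v).Connected := by
  have huc : u ≠ c := fun h => hqu (h ▸ q.end_mem_support)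
  have hbv : b ≠ v := fun h => hqv (h ▸ q.start_mem_support)
  set H := G.twoSwitch u b c v
  have hadj {x y : V} (h : G.Adj x y) (hub : s(x, y) ≠ s(u, b)) (hcv : s(x, y) ≠ s(c, v)) :
      H.Adj x y := by
    rw [← mem_edgeSet, edgeSet_twoSwitch huc hbv]
    exact Or.inr (Or.inr ⟨h, by simp only [Set.mem_insert_iff, Set.mem_singleton_iff]; tauto⟩)
  have hH_uc : H.Adj u c := by
    rw [← mem_edgeSet, edgeSet_twoSwitch huc hbv]
    exact Set.mem_insert _ _
  have hH_bv : H.Adj b v := by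
    rw [← mem_edgeSet, edgeSet_twoSwitch huc hbv]
    exact Set.mem_insert_of_mem _ (Set.mem_insert _ _)
  have hH_bc : H.Reachable b c := by
    refine ⟨q.transfer H fun e he => ?_⟩
    induction e using Sym2.ind with
    | _ x y =>
      exact hadj (q.adj_of_mem_edges he)
        (fun h => hqu (q.fst_mem_support_of_mem_edges (h ▸ he)))
        (fun h => hqv (q.snd_mem_support_of_mem_edges (h ▸ he)))
  have hH_ub : H.Reachable u b := hH_uc.reachable.trans hH_bc.symm
  have hH_cv : H.Reachable c v := hH_bc.symm.trans hH_bv.reachable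
  refine hG.of_adj_reachable fun x y hxy => ?_
  by_cases h₁ : s(x, y) = s(u, b)
  · rcases Sym2.eq_iff.1 h₁ with ⟨rfl, rfl⟩ | ⟨rfl, rfl⟩
    exacts [hH_ub, hH_ub.symm]
  by_cases h₂ : s(x, y) = s(c, v)
  · rcases Sym2.eq_iff.1 h₂ with ⟨rfl, rfl⟩ | ⟨rfl, rfl⟩
    exacts [hH_cv, hH_cv.symm]
  exact (hadj hxy h₁ h₂).reachable

lemma IsTree.twoSwitch [Finite V] (hG : G.IsTree) (hub : G.Adj u b) (hcv : G.Adj c v)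
    (huc : ¬G.Adj u c) (hbv : ¬G.Adj b v) (huv : u ≠ v) (q : G.Walk b c)
    (hqu : u ∉ q.support) (hqv : v ∉ q.support) : (G.twoSwitch u b c v).IsTree := by
  have hcard := finsum_edgeSet_twoSwitch_add (fun _ => 1) hub hcv huc hbv
    (fun h => hqu (h ▸ q.end_mem_support)) (fun h => hqv (h ▸ q.start_mem_support)) huv
  simp only [finsum_one] at hcard
  rw [isTree_iff_connected_and_card, Nat.card_coe_set_eq] at hG ⊢
  exact ⟨hG.1.twoSwitch q hqu hqv, by omega⟩

end SimpleGraph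

variable {V : Type*} {G : SimpleGraph V} {u b c v : V}

lemma deg_eq_finsum [Finite V] [DecidableEq V] (x : V) :
    deg G x = ∑ᶠ e ∈ G.edgeSet, if x ∈ e then 1 else 0 := by
  classical
  have := Fintype.ofFinite V
  rw [deg, Nat.card_eq_fintype_card, card_neighborSet_eq_degree, ← card_incidenceFinset_eq_degree,
    incidenceFinset_eq_filter, Finset.card_filter, ← coe_edgeFinset, finsum_mem_coe_finset]

lemma deg_twoSwitch [Finite V] (hub : G.Adj u b) (hcv : G.Adj c v) (huc : ¬G.Adj u c)
    (hbv : ¬G.Adj b v) (huc' : u ≠ c) (hbv' : b ≠ v) (huv : u ≠ v) :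
    deg (G.twoSwitch u b c v) = deg G := by
  classical
  funext x
  have key := finsum_edgeSet_twoSwitch_add (fun e => if x ∈ e then 1 else 0)
    hub hcv huc hbv huc' hbv' huv
  rw [← deg_eq_finsum, ← deg_eq_finsum] at key
  have hcount : ((if x ∈ s(u, b) then 1 else 0) + if x ∈ s(c, v) then 1 else 0) =
      (if x ∈ s(u, c) then 1 else 0) + if x ∈ s(b, v) then 1 else 0 := by
    have := hub.ne
    have := hcv.ne
    simp only [Sym2.mem_iff]
    split_ifs <;> grind
  omega

noncomputable def somborWeight (d : V → ℕ) : Sym2 V → ℝ :=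
  Sym2.lift ⟨fun u v => √((d u : ℝ) ^ 2 + (d v : ℝ) ^ 2), fun u v => by simp [add_comm]⟩

lemma somborIndex_eq_finsum :
    somborIndex G = ∑ᶠ e ∈ G.edgeSet, somborWeight (deg G) e := rfl

lemma somborIndex_twoSwitch_add [Finite V] (hub : G.Adj u b) (hcv : G.Adj c v)
    (huc : ¬G.Adj u c) (hbv : ¬G.Adj b v) (huc' : u ≠ c) (hbv' : b ≠ v) (huv : u ≠ v) :
    somborIndex (G.twoSwitch u b c v) +
        (√((deg G u : ℝ) ^ 2 + (deg G b : ℝ) ^ 2) + √((deg G c : ℝ) ^ 2 + (deg G v : ℝ) ^ 2)) =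
      somborIndex G +
        (√((deg G u : ℝ) ^ 2 + (deg G c : ℝ) ^ 2) + √((deg G b : ℝ) ^ 2 + (deg G v : ℝ) ^ 2)) := by
  rw [somborIndex_eq_finsum, deg_twoSwitch hub hcv huc hbv huc' hbv' huv, somborIndex_eq_finsum]
  exact finsum_edgeSet_twoSwitch_add _ hub hcv huc hbv huc' hbv' huv

lemma SimpleGraph.IsTree.pathCondition_of_forall_somborIndex_le [Finite V] {T : SimpleGraph V}
    (hT : T.IsTree)
    (hmin : ∀ T' : SimpleGraph V, T'.IsTree → deg T' = deg T → somborIndex T ≤ somborIndex T') :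
    pathCondition T := by
  intro u v p hp hlen hdeg
  obtain ⟨b, c, hub, q, hcv, rfl⟩ := p.exists_eq_cons_concat (by omega)
  simp only [Walk.length_cons, Walk.length_concat] at hlen
  simp only [Walk.cons_isPath_iff, Walk.concat_isPath_iff, Walk.support_concat, List.mem_append,
    List.mem_singleton, not_or] at hp
  obtain ⟨⟨hq, hqv⟩, hqu, huv⟩ := hp
  have huc' : u ≠ c := fun h => hqu (h ▸ q.end_mem_support)
  have hbv' : b ≠ v := fun h => hqv (h ▸ q.start_mem_support)
  change deg T (Walk.snd _) ≤ deg T (Walk.penultimate _)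
  rw [Walk.snd_cons, Walk.penultimate_cons_of_not_nil _ _ (Walk.not_nil_of_ne hbv'),
    Walk.penultimate_concat]
  by_contra! hcb
  have hbc : b ≠ c := by
    rintro rfl
    have := Walk.length_eq_zero_iff.2 (Walk.isPath_iff_nil.1 hq)
    omega
  have huc : ¬T.Adj u c := fun h => hbc <| .symm <|
    (hT.isAcyclic.eq_snd_of_adj_start ((Walk.cons_isPath_iff hub q).2 ⟨hq, hqu⟩) h
      (Walk.end_mem_support _)).trans (Walk.snd_cons q hub)
  have hbv : ¬T.Adj b v := fun h => hbc <|
    (hT.isAcyclic.eq_penultimate_of_adj_end ((Walk.concat_isPath_iff hcv).2 ⟨hq, hqv⟩) h.symm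
      (Walk.start_mem_support _)).trans (Walk.penultimate_concat q hcv)
  have hswitch := somborIndex_twoSwitch_add hub hcv huc hbv huc' hbv' huv
  have hlt := sqrt_add_sqrt_lt_sqrt_add_sqrt (Nat.cast_nonneg (deg T u))
    (Nat.cast_nonneg (deg T c)) (Nat.cast_lt.2 hdeg) (Nat.cast_lt.2 hcb)
  have := hmin _ (hT.twoSwitch hub hcv huc hbv huv q hqu hqv)
    (deg_twoSwitch hub hcv huc hbv huc' hbv' huv)
  linarith

lemma SimpleGraph.IsTree.sum_degSeq_add_two [Fintype V] {T : SimpleGraph V} (hT : T.IsTree) :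
    (degSeq T).sum + 2 = Fintype.card V + Multiset.card (degSeq T) := by
  classical
  have hsplit := Finset.sum_filter_add_sum_filter_not Finset.univ (fun v => deg T v ≠ 1) (deg T)
  have hcard := Finset.card_filter_add_card_filter_not (s := Finset.univ) (fun v => deg T v ≠ 1)
  have hpendant : ∑ v ∈ Finset.univ.filter (fun v => ¬deg T v ≠ 1), deg T v =
      (Finset.univ.filter fun v => ¬deg T v ≠ 1).card * 1 :=
    Finset.sum_const_nat fun v hv => by simpa using (Finset.mem_filter.1 hv).2
  have hhandshake : ∑ v, deg T v = 2 * T.edgeFinset.card := by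
    simp_rw [deg, Nat.card_eq_fintype_card, card_neighborSet_eq_degree]
    exact T.sum_degrees_eq_twice_card_edges
  have hedges := hT.card_edgeFinset
  simp only [degSeq, Finset.sum_map_val, Multiset.card_map, Finset.card_val, Finset.card_univ]
    at hcard ⊢
  omega

theorem exists_minimizer_pathCondition_general (D : List ℕ)
    (hreal : ∃ (n : ℕ) (T : SimpleGraph (Fin n)), T.IsTree ∧ degSeq T = ↑D) :
    ∃ (n : ℕ) (T : SimpleGraph (Fin n)), T.IsTree ∧ degSeq T = ↑D ∧
      (∀ (m : ℕ) (T' : SimpleGraph (Fin m)), T'.IsTree → degSeq T' = ↑D →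
        somborIndex T ≤ somborIndex T') ∧
      pathCondition T := by
  obtain ⟨n, T₀, hT₀, hD₀⟩ := hreal
  have hcard {m : ℕ} {T : SimpleGraph (Fin m)} (hT : T.IsTree) (hD : degSeq T = D) : m = n := by
    have h := hT.sum_degSeq_add_two
    have h₀ := hT₀.sum_degSeq_add_two
    rw [hD, Fintype.card_fin] at h
    rw [hD₀, Fintype.card_fin] at h₀
    omega
  obtain ⟨T, ⟨hT, hTD⟩, hmin⟩ :=
    Set.exists_min_image {T : SimpleGraph (Fin n) | T.IsTree ∧ degSeq T = D} somborIndex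
      (Set.toFinite _) ⟨T₀, hT₀, hD₀⟩
  refine ⟨n, T, hT, hTD, fun m T' hT' hD' => ?_,
    hT.pathCondition_of_forall_somborIndex_le fun T' hT' hdeg => ?_⟩
  · obtain rfl := hcard hT' hD'
    exact hmin T' ⟨hT', hD'⟩
  · exact hmin T' ⟨hT', by rw [← hTD, degSeq, degSeq, hdeg]⟩

/-- For any tree-realizable degree sequence `D = (d₁ ≥ … ≥ d_k ≥ 2)`, there exists a tree
with degree sequence `D` minimizing the Sombor index among all trees with degree sequence `D`
which moreover satisfies the path condition. -/
theorem exists_minimizer_pathCondition (D : List ℕ) (hne : D ≠ [])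
    (hsort : D.Pairwise (· ≥ ·)) (hD : ∀ d ∈ D, 2 ≤ d)
    (hreal : ∃ (n : ℕ) (T : SimpleGraph (Fin n)), T.IsTree ∧ degSeq T = ↑D) :
    ∃ (n : ℕ) (T : SimpleGraph (Fin n)), T.IsTree ∧ degSeq T = ↑D ∧
      (∀ (m : ℕ) (T' : SimpleGraph (Fin m)), T'.IsTree → degSeq T' = ↑D →
        somborIndex T ≤ somborIndex T') ∧
      pathCondition T :=
  exists_minimizer_pathCondition_general D hreal
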